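/- Let G be an infinite group and I a proper translation invariant ideal on G. Every I-large subset A of G is Δ_I-large. -/

import Mathlib

open Pointwise

/-- A family of subsets of `G` is an ideal if it is closed under taking subsets
and finite unions. -/
def IsSetIdeal {G : Type*} (I : Set (Set G)) : Prop :=
  (∀ s t : Set G, s ⊆ t → t ∈ I → s ∈ I) ∧ (∀ s ∈ I, ∀ t ∈ I, s ∪ t ∈ I)

/-- A family of subsets of `G` is translation invariant if it is closed under
left translation. -/
def IsTransInv {G : Type*} [Group G] (I : Set (Set G)) : Prop :=
  ∀ s ∈ I, ∀ g : G, g • s ∈ I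

/-- `A =_I B` iff the symmetric difference `A △ B` belongs to `I`. -/
def IdealEq {G : Type*} (I : Set (Set G)) (A B : Set G) : Prop :=
  symmDiff A B ∈ I

/-- `A` is `I`-large if `FA =_I G` for some finite `F ⊆ G`. -/
def ILarge {G : Type*} [Group G] (I : Set (Set G)) (A : Set G) : Prop :=
  ∃ F : Set G, F.Finite ∧ IdealEq I (F * A) Set.univ

/-- `A` is `I`-small if `(G \ A) ∩ L` is `I`-large for every `I`-large `L ⊆ G`. -/
def ISmall {G : Type*} [Group G] (I : Set (Set G)) (A : Set G) : Prop :=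
  ∀ L : Set G, ILarge I L → ILarge I ((Set.univ \ A) ∩ L)

/-- The combinatorial derivation relative to `I`:
`Δ_I(A) = {g ∈ G : gA ∩ A ∉ I}`. -/
def combDerivI {G : Type*} [Group G] (I : Set (Set G)) (A : Set G) : Set G :=
  {g : G | (g • A) ∩ A ∉ I}

/-!
If `FA =_I G`, then for every `g` the translate `gA` is covered, up to a set in `I`, by the
finitely many sets `gA ∩ fA = f((f⁻¹g)A ∩ A)` with `f ∈ F`. So if no `f⁻¹g` lies in `Δ_I(A)`,
then `gA`, hence `A`, hence `FA`, hence `G = FA ∪ (G \ FA)` lies in `I`. So either `FΔ_I(A) = G`,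
or `I` contains every subset of `G`.
-/

open Set

section

variable {G : Type*}

namespace IsSetIdeal

variable {I : Set (Set G)} {s t : Set G}

theorem mono_mem (hI : IsSetIdeal I) (hst : s ⊆ t) (ht : t ∈ I) : s ∈ I :=
  hI.1 s t hst ht

theorem union_mem (hI : IsSetIdeal I) (hs : s ∈ I) (ht : t ∈ I) : s ∪ t ∈ I :=
  hI.2 s hs t ht

theorem empty_mem (hI : IsSetIdeal I) (hs : s ∈ I) : ∅ ∈ I :=
  hI.mono_mem (empty_subset s) hs

theorem biUnion_mem {α : Type*} (hI : IsSetIdeal I) (hempty : ∅ ∈ I) {F : Set α}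
    (hF : F.Finite) {S : α → Set G} (hS : ∀ f ∈ F, S f ∈ I) : ⋃ f ∈ F, S f ∈ I := by
  induction F, hF using Set.Finite.induction_on with
  | empty => simpa using hempty
  | @insert a F _ _ ih =>
    rw [biUnion_insert]
    exact hI.union_mem (hS a (mem_insert a F)) (ih fun f hf => hS f (mem_insert_of_mem a hf))

theorem univ_mem_of_compl_mem (hI : IsSetIdeal I) (hs : s ∈ I) (hsc : sᶜ ∈ I) : univ ∈ I := by
  simpa using hI.union_mem hs hsc

end IsSetIdeal

theorem idealEq_univ_iff {I : Set (Set G)} {s : Set G} : IdealEq I s univ ↔ sᶜ ∈ I := by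
  have h : symmDiff s univ = sᶜ := symmDiff_top s
  rw [IdealEq, h]

variable [Group G] {I : Set (Set G)} {A : Set G}

theorem IsTransInv.smul_mem_iff (hT : IsTransInv I) {g : G} : g • A ∈ I ↔ A ∈ I :=
  ⟨fun h => by simpa using hT _ h g⁻¹, fun h => hT A h g⟩

theorem ILarge.univ_mem_of_mem (hI : IsSetIdeal I) (hT : IsTransInv I) (hA : ILarge I A)
    (hAI : A ∈ I) : univ ∈ I := by
  obtain ⟨F, hF, hFA⟩ := hA
  have hFAI : F * A ∈ I := by
    rw [← smul_eq_mul, ← iUnion_smul_left_image]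
    exact hI.biUnion_mem (hI.empty_mem hAI) hF fun f _ => hT A hAI f
  exact hI.univ_mem_of_compl_mem hFAI (idealEq_univ_iff.mp hFA)

theorem smul_mem_of_notMem_mul_combDerivI (hI : IsSetIdeal I) (hT : IsTransInv I)
    {F : Set G} (hF : F.Finite) (hFA : IdealEq I (F * A) univ) {g : G}
    (hg : g ∉ F * combDerivI I A) : g • A ∈ I := by
  have hcompl : (F * A)ᶜ ∈ I := idealEq_univ_iff.mp hFA
  have hcover : g • A ⊆ (⋃ f ∈ F, g • A ∩ f • A) ∪ (F * A)ᶜ := by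
    intro x hx
    by_cases hxFA : x ∈ F * A
    · obtain ⟨f, hf, a, ha, rfl⟩ := hxFA
      exact Or.inl (mem_biUnion hf ⟨hx, smul_mem_smul_set ha⟩)
    · exact Or.inr hxFA
  refine hI.mono_mem hcover (hI.union_mem (hI.biUnion_mem (hI.empty_mem hcompl) hF ?_) hcompl)
  intro f hf
  have hfg : (f⁻¹ * g) • A ∩ A ∈ I := by
    by_contra h
    exact hg ⟨f, hf, f⁻¹ * g, h, mul_inv_cancel_left f g⟩
  simpa [smul_set_inter, smul_smul] using hT _ hfg f

end

theorem Ilarge_implies_deltaI_large_general {G : Type*} [Group G]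
    (I : Set (Set G)) (hIdeal : IsSetIdeal I) (hTrans : IsTransInv I)
    (A : Set G) (hA : ILarge I A) :
    ILarge I (combDerivI I A) := by
  obtain ⟨F, hF, hFA⟩ := hA
  refine ⟨F, hF, idealEq_univ_iff.mpr ?_⟩
  rcases (F * combDerivI I A)ᶜ.eq_empty_or_nonempty with hempty | ⟨g, hg⟩
  · rw [hempty]
    exact hIdeal.empty_mem hFA
  · have hgA := smul_mem_of_notMem_mul_combDerivI hIdeal hTrans hF hFA hg
    have huniv :=
      ILarge.univ_mem_of_mem hIdeal hTrans ⟨F, hF, hFA⟩ (hTrans.smul_mem_iff.mp hgA)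
    exact hIdeal.mono_mem (subset_univ _) huniv

/-- Every `I`-large set is `Δ_I`-large. -/
theorem Ilarge_implies_deltaI_large {G : Type*} [Group G] [Infinite G]
    (I : Set (Set G)) (hIdeal : IsSetIdeal I) (hTrans : IsTransInv I)
    (hProper : Set.univ ∉ I) (A : Set G) (hA : ILarge I A) :
    ILarge I (combDerivI I A) :=
  Ilarge_implies_deltaI_large_general I hIdeal hTrans A hA
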